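/- arXiv:1706.04882 — 4 statements merged into one kernel-verified Lean document; each statement's English description precedes it below -/
import Mathlib

section
/- Let (p,p') be a pair of coprime positive integers with p ≥ 2 and p' ≥ 2, set a = p'/p, let (r,s) ∈ K_{p,p'}, x ∈ ℂ, and ε,ε' ∈ {0,1}. Then for all (τ,u,t) ∈ ℍ×ℂ×ℂ one has T^{ε,ε'}_{r,s;x}(τ+1, u, t) = e^{2πi( a(x−iε/2)² + (rp'−sp)²/(4pp') − (1−ε)/8 )} · T^{ε, εε'+(1−ε)(1−ε')}_{r,s;x}(τ,u,t). -/
open Complex MeasureTheory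
open scoped Real

noncomputable section

/-- `e2 x = exp(2πi x)`. -/
def e2 (x : ℂ) : ℂ := Complex.exp (2 * (π : ℂ) * Complex.I * x)

/-- Dedekind dedekindEta function. -/
def dedekindEta (τ : ℂ) : ℂ := e2 (τ / 24) * ∏' n : ℕ, (1 - e2 (τ * (n + 1)))

/-- Jacobi theta with characteristics ε, ε' ∈ {0,1}. -/
def theta (ε ε' : ℕ) (u τ : ℂ) : ℂ :=
  e2 (u * ε / 2) * e2 (τ * ε / 8) *
    ∏' n : ℕ,
      ((1 - e2 (τ * (n + 1))) *
        (1 + (-1 : ℂ) ^ ε' * e2 u * e2 (τ * ((n + 1 : ℂ) - (1 - (ε : ℂ)) / 2))) *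
        (1 + (-1 : ℂ) ^ ε' * e2 (-u) * e2 (τ * ((n + 1 : ℂ) - (1 + (ε : ℂ)) / 2))))

/-- Normalized BPZ minimal-series character. -/
def chiBPZ (p p' r s : ℤ) (τ : ℂ) : ℂ :=
  (dedekindEta τ)⁻¹ * ∑' n : ℤ,
    (e2 (τ * ((p * p' : ℂ) * ((n : ℂ) + ((r * p' - s * p : ℤ) : ℂ) / (2 * p * p')) ^ 2)) -
     e2 (τ * ((p * p' : ℂ) * ((n : ℂ) + ((-r * p' - s * p : ℤ) : ℂ) / (2 * p * p')) ^ 2)))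

/-- The typical character function T^{ε,ε'}_{r,s;x}(τ,u,t). -/
def Tchar (p p' : ℤ) (ε ε' : ℕ) (r s : ℤ) (x : ℂ) (τ u t : ℂ) : ℂ :=
  (-1 : ℂ) ^ (ε * ε') *
    e2 (τ * (((p' : ℂ) / p) * (x - Complex.I * ε / 2) ^ 2)) *
    e2 (u * (2 * Complex.I * ((p' : ℂ) / p) * (x - Complex.I * ε / 2))) *
    e2 (t * (3 * (1 - 2 * ((p' : ℂ) / p)))) *
    theta ε ε' u τ / (dedekindEta τ) ^ 2 * chiBPZ p p' r s τ

/-- The index set K_{p,p'}. -/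
def Kset (p p' : ℤ) : Finset (ℤ × ℤ) :=
  (Finset.Icc 1 (p - 1) ×ˢ Finset.Icc 1 (p' - 1)).filter
    (fun rs => rs.1 * p' + rs.2 * p ≤ p * p')

/-- BPZ modular S-matrix. -/
def SBPZ (p p' r s r' s' : ℤ) : ℂ :=
  (Real.sqrt (8 / ((p : ℝ) * p')) : ℂ) * (-1 : ℂ) ^ ((r + s) * (r' + s')) *
    (Real.sin (π * ((p : ℝ) - p') * r * r' / p) : ℂ) *
    (Real.sin (π * ((p : ℝ) - p') * s * s' / p') : ℂ)

/-- Typical-typical modular S-data. -/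
def Stt (p p' : ℤ) (ε ε' : ℕ) (r s : ℤ) (x : ℂ) (r' s' : ℤ) (x' : ℂ) : ℂ :=
  Complex.I ^ (-((ε : ℤ) * ε')) * SBPZ p p' r s r' s' *
    (Real.sqrt (2 * ((p' : ℝ) / p)) : ℂ) *
    Complex.exp (-4 * (π : ℂ) * Complex.I * ((p' : ℂ) / p) *
      (x - Complex.I * ε / 2) * (x' - Complex.I * ε' / 2))


/-!
Under `τ ↦ τ + 1` every `q`-power occurring in `η`, `ϑ_{ε,ε'}` and the theta series of `χ_{r,s}`
has exponent constant modulo `ℤ` (namely `1/24`, `ε/8`, `(rp' - sp)²/(4pp')`, and a half-integer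
`n + (1 ± ε)/2` on the `z`-factors of `ϑ`), so each function only acquires a phase. On the
`z`-factors that phase is `(-1)^(ε+1)`, which for `ε = 0` flips `ε'` to `1 - ε'`.
-/

lemma e2_add (x y : ℂ) : e2 (x + y) = e2 x * e2 y := by
  simp only [e2, mul_add, Complex.exp_add]

lemma e2_ne_zero (x : ℂ) : e2 x ≠ 0 := Complex.exp_ne_zero _

lemma e2_intCast (m : ℤ) : e2 m = 1 := by
  rw [e2, show 2 * (π : ℂ) * I * m = m * (2 * π * I) by ring]
  exact Complex.exp_int_mul_two_pi_mul_I m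

lemma e2_natCast_div_two (k : ℕ) : e2 (k / 2) = (-1) ^ k := by
  rw [e2, show 2 * (π : ℂ) * I * (k / 2) = k * (π * I) by ring, Complex.exp_nat_mul,
    Complex.exp_pi_mul_I]

lemma e2_add_intCast (x : ℂ) (m : ℤ) : e2 (x + m) = e2 x := by
  rw [e2_add, e2_intCast, mul_one]

lemma e2_add_one_mul (τ x : ℂ) : e2 ((τ + 1) * x) = e2 x * e2 (τ * x) := by
  rw [add_one_mul, e2_add, mul_comm]

lemma e2_add_one_mul_natCast_add_one (τ : ℂ) (n : ℕ) :
    e2 ((τ + 1) * (n + 1)) = e2 (τ * (n + 1)) := by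
  rw [add_one_mul]
  exact_mod_cast e2_add_intCast (τ * (n + 1)) (n + 1)

lemma dedekindEta_add_one (τ : ℂ) : dedekindEta (τ + 1) = e2 (1 / 24) * dedekindEta τ := by
  simp only [dedekindEta, e2_add_one_mul_natCast_add_one, add_div, e2_add]
  ring

lemma e2_add_one_mul_half_shift (τ : ℂ) (n ε : ℕ) :
    e2 ((τ + 1) * ((n + 1 : ℂ) - (1 - (ε : ℂ)) / 2)) =
        (-1) ^ (ε + 1) * e2 (τ * ((n + 1 : ℂ) - (1 - (ε : ℂ)) / 2)) ∧
      e2 ((τ + 1) * ((n + 1 : ℂ) - (1 + (ε : ℂ)) / 2)) =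
        (-1) ^ (ε + 1) * e2 (τ * ((n + 1 : ℂ) - (1 + (ε : ℂ)) / 2)) := by
  have hsign : e2 (((2 * n + ε + 1 : ℕ) : ℂ) / 2) = (-1) ^ (ε + 1) := by
    rw [e2_natCast_div_two, add_assoc, pow_add, pow_mul]
    simp
  have hminus : e2 ((n + 1 : ℂ) - (1 - (ε : ℂ)) / 2) = (-1) ^ (ε + 1) := by
    rw [← hsign]
    congr 1
    push_cast
    ring
  have hplus : e2 ((n + 1 : ℂ) - (1 + (ε : ℂ)) / 2) = (-1) ^ (ε + 1) := by
    rw [← hsign, ← e2_add_intCast (((2 * n + ε + 1 : ℕ) : ℂ) / 2) (-ε)]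
    congr 1
    push_cast
    ring
  exact ⟨by rw [e2_add_one_mul, hminus], by rw [e2_add_one_mul, hplus]⟩

lemma theta_add_one (ε ε' : ℕ) (u τ : ℂ) :
    theta ε ε' u (τ + 1) = e2 (ε / 8) * theta ε (ε' + ε + 1) u τ := by
  have hterm (c : ℂ) (n : ℕ) :
      (-1) ^ ε' * c * e2 ((τ + 1) * ((n + 1 : ℂ) - (1 - (ε : ℂ)) / 2)) =
          (-1) ^ (ε' + ε + 1) * c * e2 (τ * ((n + 1 : ℂ) - (1 - (ε : ℂ)) / 2)) ∧
        (-1) ^ ε' * c * e2 ((τ + 1) * ((n + 1 : ℂ) - (1 + (ε : ℂ)) / 2)) =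
          (-1) ^ (ε' + ε + 1) * c * e2 (τ * ((n + 1 : ℂ) - (1 + (ε : ℂ)) / 2)) := by
    obtain ⟨hminus, hplus⟩ := e2_add_one_mul_half_shift τ n ε
    rw [hminus, hplus, add_assoc ε', pow_add]
    constructor <;> ring
  have hprefix : e2 ((τ + 1) * ε / 8) = e2 (ε / 8) * e2 (τ * ε / 8) := by
    rw [← e2_add]
    ring_nf
  simp only [theta, e2_add_one_mul_natCast_add_one, hterm, hprefix]
  ring

lemma theta_congr_neg_one_pow {ε'₁ ε'₂ : ℕ} (h : (-1 : ℂ) ^ ε'₁ = (-1) ^ ε'₂) (ε : ℕ) (u τ : ℂ) :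
    theta ε ε'₁ u τ = theta ε ε'₂ u τ := by
  simp only [theta, h]

lemma e2_add_one_mul_shifted_sq {p p' : ℤ} (hp : (p : ℂ) ≠ 0) (hp' : (p' : ℂ) ≠ 0)
    (c n : ℤ) (τ : ℂ) :
    e2 ((τ + 1) * ((p * p' : ℂ) * ((n : ℂ) + (c : ℂ) / (2 * p * p')) ^ 2)) =
      e2 ((c : ℂ) ^ 2 / (4 * p * p')) *
        e2 (τ * ((p * p' : ℂ) * ((n : ℂ) + (c : ℂ) / (2 * p * p')) ^ 2)) := by
  have hsq : (p * p' : ℂ) * ((n : ℂ) + (c : ℂ) / (2 * p * p')) ^ 2 =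
      (c : ℂ) ^ 2 / (4 * p * p') + ((p * p' * n ^ 2 + n * c : ℤ) : ℂ) := by
    push_cast
    field_simp
    ring
  rw [e2_add_one_mul, hsq, e2_add_intCast]

lemma e2_sq_div_four_mul_neg_r {p p' : ℤ} (hp : (p : ℂ) ≠ 0) (hp' : (p' : ℂ) ≠ 0) (r s : ℤ) :
    e2 (((-r * p' - s * p : ℤ) : ℂ) ^ 2 / (4 * p * p')) =
      e2 (((r * p' - s * p : ℤ) : ℂ) ^ 2 / (4 * p * p')) := by
  rw [← e2_add_intCast (((r * p' - s * p : ℤ) : ℂ) ^ 2 / (4 * p * p')) (r * s)]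
  congr 1
  push_cast
  field_simp
  ring

lemma chiBPZ_add_one {p p' : ℤ} (hp : (p : ℂ) ≠ 0) (hp' : (p' : ℂ) ≠ 0) (r s : ℤ) (τ : ℂ) :
    chiBPZ p p' r s (τ + 1) =
      (e2 (1 / 24))⁻¹ * e2 (((r * p' - s * p : ℤ) : ℂ) ^ 2 / (4 * p * p')) *
        chiBPZ p p' r s τ := by
  simp only [chiBPZ, e2_add_one_mul_shifted_sq hp hp', e2_sq_div_four_mul_neg_r hp hp', ← mul_sub,
    tsum_mul_left, dedekindEta_add_one, mul_inv]
  ring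

theorem typical_T_transformation_general (p p' : ℤ) (hp : 2 ≤ p) (hp' : 2 ≤ p')
    (r s : ℤ) (x : ℂ)
    (ε ε' : ℕ) (hε : ε ≤ 1) (hε' : ε' ≤ 1)
    (τ : ℂ) (u t : ℂ) :
    Tchar p p' ε ε' r s x (τ + 1) u t =
      Complex.exp (2 * (π : ℂ) * Complex.I *
          (((p' : ℂ) / p) * (x - Complex.I * ε / 2) ^ 2 +
            ((r * p' - s * p : ℤ) : ℂ) ^ 2 / (4 * p * p') - (1 - (ε : ℂ)) / 8)) *
        Tchar p p' ε (ε * ε' + (1 - ε) * (1 - ε')) r s x τ u t := by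
  have hp0 : (p : ℂ) ≠ 0 := by exact_mod_cast (by omega : p ≠ 0)
  have hp'0 : (p' : ℂ) ≠ 0 := by exact_mod_cast (by omega : p' ≠ 0)
  have hsign : (-1 : ℂ) ^ (ε * ε') = (-1) ^ (ε * (ε * ε' + (1 - ε) * (1 - ε'))) ∧
      (-1 : ℂ) ^ (ε' + ε + 1) = (-1) ^ (ε * ε' + (1 - ε) * (1 - ε')) := by
    interval_cases ε <;> interval_cases ε' <;> norm_num
  have hphase : e2 (((p' : ℂ) / p) * (x - I * ε / 2) ^ 2 +
      ((r * p' - s * p : ℤ) : ℂ) ^ 2 / (4 * p * p') - (1 - (ε : ℂ)) / 8) =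
      e2 (((p' : ℂ) / p) * (x - I * ε / 2) ^ 2) * e2 (ε / 8) *
        e2 (((r * p' - s * p : ℤ) : ℂ) ^ 2 / (4 * p * p')) / e2 (1 / 24) ^ 3 := by
    rw [eq_div_iff (pow_ne_zero _ (e2_ne_zero _))]
    simp only [pow_succ, pow_zero, one_mul, ← e2_add]
    ring_nf
  unfold Tchar
  rw [theta_add_one, theta_congr_neg_one_pow hsign.2, dedekindEta_add_one,
    chiBPZ_add_one hp0 hp'0, e2_add_one_mul, hsign.1, ← e2.eq_1, hphase]
  field_simp [e2_ne_zero]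

/-- Modular T-transformation of the typical characters. -/
theorem typical_T_transformation (p p' : ℤ) (hp : 2 ≤ p) (hp' : 2 ≤ p')
    (hco : IsCoprime p p') (r s : ℤ) (hK : (r, s) ∈ Kset p p') (x : ℂ)
    (ε ε' : ℕ) (hε : ε ≤ 1) (hε' : ε' ≤ 1)
    (τ : ℂ) (hτ : 0 < τ.im) (u t : ℂ) :
    Tchar p p' ε ε' r s x (τ + 1) u t =
      Complex.exp (2 * (π : ℂ) * Complex.I *
          (((p' : ℂ) / p) * (x - Complex.I * ε / 2) ^ 2 +
            ((r * p' - s * p : ℤ) : ℂ) ^ 2 / (4 * p * p') - (1 - (ε : ℂ)) / 8)) *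
        Tchar p p' ε (ε * ε' + (1 - ε) * (1 - ε')) r s x τ u t :=
  typical_T_transformation_general p p' hp hp' r s x ε ε' hε hε' τ u t

end
end

section
/- Let (p,p') be a pair of coprime positive integers with p ≥ 2, and write p' = kp + ℓ with integers k ≥ 0 and 1 ≤ ℓ ≤ p−1. Then for each integer m with 0 ≤ m ≤ p−1 there exists a unique pair of integers (r_m, s_m) with 0 ≤ r_m ≤ p−1, 0 ≤ s_m ≤ ℓ−1 and m = ℓ r_m − p s_m, and the set of all integer triples (r,s;θ) with 1 ≤ r ≤ p−1, 0 ≤ s ≤ p'−1 and 2m+2p'−p = 2(r−2θ)p' − (2s+1)p equals { (2θ+1+r_m, k r_m + s_m; θ) : θ ∈ ℤ, −⌊r_m/2⌋ ≤ θ ≤ ⌊(p−r_m)/2⌋ − 1 }. -/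
/-!
Since `p` and `ℓ` are coprime, `r ↦ ℓ r mod p` permutes the residues `0, …, p - 1`, which gives
existence and uniqueness of `(r_m, s_m)`; the bounds `0 ≤ m < p` and `0 ≤ r_m < p` then force
`0 ≤ s_m < ℓ`. The spectral equation is equivalent to `(r - 2θ - 1) p' = m + s p`. The bounds on
`m` and `s` squeeze `R := r - 2θ - 1` into `[0, p)`, and since `p' = k p + ℓ` the equation reads
`m = ℓ R - p (s - k R)`; uniqueness of `(r_m, s_m)` gives `R = r_m` and `s = k r_m + s_m`.
-/

namespace Int

variable {p ℓ m : ℤ}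

theorem exists_eq_mul_sub_mul_of_isCoprime (hco : IsCoprime p ℓ) (hp : 0 < p) (m : ℤ) :
    ∃ r s, 0 ≤ r ∧ r < p ∧ m = ℓ * r - p * s := by
  obtain ⟨u, v, huv⟩ := hco
  refine ⟨v * m % p, -(u * m) - ℓ * (v * m / p), emod_nonneg _ hp.ne', emod_lt_of_pos _ hp, ?_⟩
  rw [emod_def]
  linear_combination -m * huv

theorem eq_and_eq_of_mul_sub_mul_eq {a b s t : ℤ} (hco : IsCoprime p ℓ) (ha0 : 0 ≤ a)
    (ha : a < p) (hb0 : 0 ≤ b) (hb : b < p) (h : ℓ * a - p * s = ℓ * b - p * t) :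
    a = b ∧ s = t := by
  have hdvd : p ∣ (a - b) * ℓ := ⟨s - t, by linear_combination h⟩
  have hab : a - b = 0 :=
    eq_zero_of_abs_lt_dvd (hco.dvd_of_dvd_mul_right hdvd) (abs_lt.mpr ⟨by omega, by omega⟩)
  refine ⟨by omega, mul_left_cancel₀ (by omega : p ≠ 0) ?_⟩
  linear_combination ℓ * hab - h

theorem nonneg_and_lt_of_eq_mul_sub_mul {r s : ℤ} (hℓ : 0 < ℓ) (hm0 : 0 ≤ m) (hm1 : m < p)
    (hr0 : 0 ≤ r) (hr1 : r < p) (h : m = ℓ * r - p * s) : 0 ≤ s ∧ s < ℓ := by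
  constructor <;> nlinarith

theorem existsUnique_eq_mul_sub_mul (hco : IsCoprime p ℓ) (hℓ : 0 < ℓ) (hm0 : 0 ≤ m)
    (hm1 : m ≤ p - 1) :
    ∃! rs : ℤ × ℤ, 0 ≤ rs.1 ∧ rs.1 ≤ p - 1 ∧ 0 ≤ rs.2 ∧ rs.2 ≤ ℓ - 1 ∧
      m = ℓ * rs.1 - p * rs.2 := by
  obtain ⟨r, s, hr0, hr1, hm⟩ := exists_eq_mul_sub_mul_of_isCoprime hco (by omega) m
  obtain ⟨hs0, hs1⟩ := nonneg_and_lt_of_eq_mul_sub_mul hℓ hm0 (by omega) hr0 hr1 hm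
  refine ⟨(r, s), ⟨hr0, by omega, hs0, by omega, hm⟩, ?_⟩
  rintro ⟨r', s'⟩ ⟨hr0', hr1', -, -, hm'⟩
  obtain ⟨rfl, rfl⟩ := eq_and_eq_of_mul_sub_mul_eq hco hr0' (by omega) hr0 hr1 (hm' ▸ hm)
  rfl

theorem mul_eq_add_mul_iff {p' k rm sm R s : ℤ} (hco : IsCoprime p ℓ) (hkl : p' = k * p + ℓ)
    (hk : 0 ≤ k) (hm0 : 0 ≤ m) (hm1 : m < p) (hrm0 : 0 ≤ rm) (hrm1 : rm < p) (hsm0 : 0 ≤ sm)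
    (hsm1 : sm < ℓ) (hm : m = ℓ * rm - p * sm) :
    (0 ≤ s ∧ s ≤ p' - 1 ∧ R * p' = m + s * p) ↔ R = rm ∧ s = k * rm + sm := by
  constructor
  · rintro ⟨hs0, hs1, h⟩
    have hR0 : 0 ≤ R := by nlinarith
    have hR1 : R < p := by nlinarith
    have h' : ℓ * R - p * (s - k * R) = ℓ * rm - p * sm := by linear_combination h - R * hkl + hm
    obtain ⟨rfl, hs⟩ := eq_and_eq_of_mul_sub_mul_eq hco hR0 hR1 hrm0 hrm1 h'
    exact ⟨rfl, by linear_combination hs⟩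
  · rintro ⟨rfl, rfl⟩
    refine ⟨by positivity, by nlinarith, by linear_combination R * hkl - hm⟩

end Int

theorem discrete_spectra_parameterization_general (p p' k ℓ : ℤ)
    (hco : IsCoprime p p') (hk : 0 ≤ k) (hℓ : 1 ≤ ℓ)
    (hkl : p' = k * p + ℓ) (m : ℤ) (hm0 : 0 ≤ m) (hm1 : m ≤ p - 1) :
    (∃! rs : ℤ × ℤ, 0 ≤ rs.1 ∧ rs.1 ≤ p - 1 ∧ 0 ≤ rs.2 ∧ rs.2 ≤ ℓ - 1 ∧
        m = ℓ * rs.1 - p * rs.2) ∧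
    ∀ rm sm : ℤ, 0 ≤ rm → rm ≤ p - 1 → 0 ≤ sm → sm ≤ ℓ - 1 → m = ℓ * rm - p * sm →
      {x : ℤ × ℤ × ℤ | 1 ≤ x.1 ∧ x.1 ≤ p - 1 ∧ 0 ≤ x.2.1 ∧ x.2.1 ≤ p' - 1 ∧
          2 * m + 2 * p' - p = 2 * (x.1 - 2 * x.2.2) * p' - (2 * x.2.1 + 1) * p} =
        {x : ℤ × ℤ × ℤ | ∃ θ : ℤ, -(rm / 2) ≤ θ ∧ θ ≤ (p - rm) / 2 - 1 ∧
          x = (2 * θ + 1 + rm, k * rm + sm, θ)} := by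
  have hcoℓ : IsCoprime p ℓ := IsCoprime.mul_add_right_right_iff.mp (hkl ▸ hco)
  refine ⟨Int.existsUnique_eq_mul_sub_mul hcoℓ (by omega) hm0 hm1, ?_⟩
  intro rm sm hrm0 hrm1 hsm0 hsm1 hm
  ext ⟨r, s, θ⟩
  have hspec : 2 * m + 2 * p' - p = 2 * (r - 2 * θ) * p' - (2 * s + 1) * p ↔
      (r - 2 * θ - 1) * p' = m + s * p := by
    constructor <;> intro h <;> linarith
  have hsol := Int.mul_eq_add_mul_iff (R := r - 2 * θ - 1) (s := s) hcoℓ hkl hk hm0 (by omega) hrm0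
    (by omega) hsm0 (by omega) hm
  simp only [Set.mem_ofPred_eq, Prod.mk.injEq, hspec]
  constructor
  · rintro ⟨hr1, hr2, hs⟩
    obtain ⟨hR, rfl⟩ := hsol.mp hs
    exact ⟨θ, by omega, by omega, by omega, rfl, rfl⟩
  · rintro ⟨θ, hθ0, hθ1, rfl, rfl, rfl⟩
    exact ⟨by omega, by omega, hsol.mpr ⟨by ring, rfl⟩⟩

/-- Parameterization of the discrete spectra 𝒮^{(m)}_{p,p'}: existence and uniqueness of
(r_m, s_m), and the explicit description of the solution set. -/
theorem discrete_spectra_parameterization (p p' k ℓ : ℤ) (hp : 2 ≤ p) (hp' : 1 ≤ p')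
    (hco : IsCoprime p p') (hk : 0 ≤ k) (hℓ : 1 ≤ ℓ) (hℓp : ℓ ≤ p - 1)
    (hkl : p' = k * p + ℓ) (m : ℤ) (hm0 : 0 ≤ m) (hm1 : m ≤ p - 1) :
    (∃! rs : ℤ × ℤ, 0 ≤ rs.1 ∧ rs.1 ≤ p - 1 ∧ 0 ≤ rs.2 ∧ rs.2 ≤ ℓ - 1 ∧
        m = ℓ * rs.1 - p * rs.2) ∧
    ∀ rm sm : ℤ, 0 ≤ rm → rm ≤ p - 1 → 0 ≤ sm → sm ≤ ℓ - 1 → m = ℓ * rm - p * sm →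
      {x : ℤ × ℤ × ℤ | 1 ≤ x.1 ∧ x.1 ≤ p - 1 ∧ 0 ≤ x.2.1 ∧ x.2.1 ≤ p' - 1 ∧
          2 * m + 2 * p' - p = 2 * (x.1 - 2 * x.2.2) * p' - (2 * x.2.1 + 1) * p} =
        {x : ℤ × ℤ × ℤ | ∃ θ : ℤ, -(rm / 2) ≤ θ ∧ θ ≤ (p - rm) / 2 - 1 ∧
          x = (2 * θ + 1 + rm, k * rm + sm, θ)} :=
  discrete_spectra_parameterization_general p p' k ℓ hco hk hℓ hkl m hm0 hm1
end

section
/- Let (p,p') be a pair of coprime positive integers with p ≥ 2. Then the set of discrete spectra 𝒮_{p,p'} is finite of cardinality |𝒮_{p,p'}| = p(p−1)/2. -/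
/-!
Writing `t = r - 1 - 2θ`, the defining equation of `𝒮_{p,p'}` says `t p' = m + s p`. Since
`0 ≤ m < p` and `0 ≤ s < p'`, this is division with remainder of `t p'` by `p`, which is
possible exactly when `0 ≤ t < p`, and then `s` is determined by `t`. Hence
`(r, s, θ) ↦ (r, t)` identifies `𝒮_{p,p'}` with the pairs `1 ≤ r < p`, `0 ≤ t < p` with
`r + t` odd, independently of `p'`. Folding this set along the diagonal, `(r, t) ↦ (t, r)` for
`t < r` and `(r, t) ↦ (r - 1, t)` for `r < t`, matches it with the pairs `0 ≤ i < j < p`,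
of which there are `p(p-1)/2`.
-/

/-- The set of discrete spectra 𝒮_{p,p'} (as a set of triples (r,s,θ)). -/
def SpectraSet (p p' : ℤ) : Set (ℤ × ℤ × ℤ) :=
  {x | 1 ≤ x.1 ∧ x.1 ≤ p - 1 ∧ 0 ≤ x.2.1 ∧ x.2.1 ≤ p' - 1 ∧
    ∃ m : ℤ, 0 ≤ m ∧ m ≤ p - 1 ∧
      2 * m + 2 * p' - p = 2 * (x.1 - 2 * x.2.2) * p' - (2 * x.2.1 + 1) * p}

namespace SpectraSet

theorem quot_rem_bounds_iff {p p' s t : ℤ} (hp : 0 < p) (hp' : 0 < p') :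
    (0 ≤ s ∧ s ≤ p' - 1 ∧ ∃ m, 0 ≤ m ∧ m ≤ p - 1 ∧ m + s * p = t * p') ↔
      0 ≤ t ∧ t ≤ p - 1 ∧ s = t * p' / p := by
  constructor
  · rintro ⟨hs₀, hs₁, m, hm₀, hm₁, hm⟩
    have hquot : s = t * p' / p :=
      ((Int.ediv_emod_unique hp).mpr ⟨by linear_combination hm, hm₀, by omega⟩).1.symm
    have hlt : t * p' < p * p' := by nlinarith
    exact ⟨nonneg_of_mul_nonneg_left (by nlinarith) hp',
      Int.le_sub_one_of_lt (lt_of_mul_lt_mul_right hlt hp'.le), hquot⟩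
  · rintro ⟨ht₀, ht₁, rfl⟩
    refine ⟨Int.ediv_nonneg (by positivity) hp.le,
      Int.le_sub_one_of_lt (Int.ediv_lt_of_lt_mul hp (by nlinarith)), t * p' % p,
      Int.emod_nonneg _ hp.ne', Int.le_sub_one_of_lt (Int.emod_lt_of_pos _ hp), ?_⟩
    linear_combination Int.emod_add_mul_ediv (t * p') p

theorem mem_iff {p p' : ℤ} (hp : 0 < p) (hp' : 0 < p') {r s θ : ℤ} :
    (r, s, θ) ∈ SpectraSet p p' ↔
      1 ≤ r ∧ r ≤ p - 1 ∧ 0 ≤ r - 1 - 2 * θ ∧ r - 1 - 2 * θ ≤ p - 1 ∧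
        s = (r - 1 - 2 * θ) * p' / p := by
  have hspec : ∀ m, 2 * m + 2 * p' - p = 2 * (r - 2 * θ) * p' - (2 * s + 1) * p ↔
      m + s * p = (r - 1 - 2 * θ) * p' := fun m =>
    ⟨fun h => mul_left_cancel₀ two_ne_zero (by linear_combination h),
      fun h => by linear_combination 2 * h⟩
  simp only [SpectraSet, Set.mem_ofPred_eq, hspec, quot_rem_bounds_iff hp hp']

def oddSumPairs (p : ℤ) : Set (ℤ × ℤ) :=
  {x | 1 ≤ x.1 ∧ x.1 ≤ p - 1 ∧ 0 ≤ x.2 ∧ x.2 ≤ p - 1 ∧ Odd (x.1 + x.2)}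

theorem mem_oddSumPairs {p r t : ℤ} :
    (r, t) ∈ oddSumPairs p ↔
      1 ≤ r ∧ r ≤ p - 1 ∧ 0 ≤ t ∧ t ≤ p - 1 ∧ Odd (r + t) :=
  Iff.rfl

def toOddSumPair (x : ℤ × ℤ × ℤ) : ℤ × ℤ := (x.1, x.1 - 1 - 2 * x.2.2)

theorem bijOn_toOddSumPair {p p' : ℤ} (hp : 0 < p) (hp' : 0 < p') :
    Set.BijOn toOddSumPair (SpectraSet p p') (oddSumPairs p) := by
  refine ⟨?_, ?_, ?_⟩
  · rintro ⟨r, s, θ⟩ hx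
    obtain ⟨hr₀, hr₁, ht₀, ht₁, -⟩ := (mem_iff hp hp').mp hx
    exact ⟨hr₀, hr₁, ht₀, ht₁, r - θ - 1, by dsimp only [toOddSumPair]; ring⟩
  · rintro ⟨r, s, θ⟩ hx ⟨r', s', θ'⟩ hx' h
    obtain ⟨-, -, -, -, rfl⟩ := (mem_iff hp hp').mp hx
    obtain ⟨-, -, -, -, rfl⟩ := (mem_iff hp hp').mp hx'
    simp only [toOddSumPair, Prod.mk.injEq] at h
    obtain ⟨rfl, hθ⟩ := h
    obtain rfl : θ = θ' := by omega
    rfl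
  · rintro ⟨r, t⟩ ⟨hr₀, hr₁, ht₀, ht₁, k, hk⟩
    have hθ : r - 1 - 2 * (r - 1 - k) = t := by omega
    refine ⟨(r, t * p' / p, r - 1 - k), (mem_iff hp hp').mpr ?_, ?_⟩
    · rw [hθ]
      exact ⟨hr₀, hr₁, ht₀, ht₁, rfl⟩
    · simp only [toOddSumPair, hθ]

noncomputable def triangle (p : ℤ) : Finset (ℤ × ℤ) :=
  {x ∈ Finset.Ico 0 p ×ˢ Finset.Ico 0 p | x.1 < x.2}

theorem mem_triangle {p : ℤ} {x : ℤ × ℤ} :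
    x ∈ triangle p ↔ 0 ≤ x.1 ∧ x.1 < x.2 ∧ x.2 < p := by
  simp only [triangle, Finset.mem_filter, Finset.mem_product, Finset.mem_Ico]
  omega

theorem card_triangle {p : ℤ} (hp : 0 ≤ p) : ((triangle p).card : ℤ) = p * (p - 1) / 2 := by
  lift p to ℕ using hp with n
  rw [triangle, Finset.card_product_filter_lt, Int.card_Ico, sub_zero, Int.toNat_natCast,
    Nat.choose_two_right]
  rcases n with _ | n
  · simp
  · push_cast
    simp

def foldDiagonal (x : ℤ × ℤ) : ℤ × ℤ := if x.2 < x.1 then (x.2, x.1) else (x.1 - 1, x.2)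

theorem bijOn_foldDiagonal (p : ℤ) : Set.BijOn foldDiagonal (oddSumPairs p) (triangle p) := by
  refine ⟨?_, ?_, ?_⟩
  · rintro ⟨r, t⟩ ⟨hr₀, hr₁, ht₀, ht₁, k, hk⟩
    simp only [foldDiagonal, Finset.mem_coe, mem_triangle]
    split_ifs <;> omega
  · rintro ⟨r, t⟩ ⟨-, -, -, -, k, hk⟩ ⟨r', t'⟩ ⟨-, -, -, -, k', hk'⟩ h
    simp only [foldDiagonal] at h
    split_ifs at h <;> simp only [Prod.mk.injEq] at h ⊢ <;> omega
  · rintro ⟨i, j⟩ hx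
    obtain ⟨hi, hij, hj⟩ := mem_triangle.mp hx
    rcases Int.even_or_odd (j - i) with ⟨k, hk⟩ | ⟨k, hk⟩
    · refine ⟨(i + 1, j), mem_oddSumPairs.mpr
        ⟨by omega, by omega, by omega, by omega, k + i, by omega⟩, ?_⟩
      simp only [foldDiagonal, if_neg (show ¬j < i + 1 by omega), add_sub_cancel_right]
    · exact ⟨(j, i), mem_oddSumPairs.mpr
        ⟨by omega, by omega, by omega, by omega, k + i, by omega⟩, if_pos hij⟩

end SpectraSet

open SpectraSet in
theorem spectra_card_general (p p' : ℤ) (hp : 2 ≤ p) (hp' : 1 ≤ p') :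
    (SpectraSet p p').Finite ∧ ((SpectraSet p p').ncard : ℤ) = p * (p - 1) / 2 := by
  have hbij := (bijOn_foldDiagonal p).comp (bijOn_toOddSumPair (p' := p') (by omega) (by omega))
  refine ⟨hbij.finite_iff_finite.mpr (triangle p).finite_toSet, ?_⟩
  rw [hbij.ncard_eq, Set.ncard_coe_finset, card_triangle (by omega)]

/-- The set of discrete spectra is finite of cardinality p(p-1)/2. -/
theorem spectra_card (p p' : ℤ) (hp : 2 ≤ p) (hp' : 1 ≤ p') (hco : IsCoprime p p') :
    (SpectraSet p p').Finite ∧ ((SpectraSet p p').ncard : ℤ) = p * (p - 1) / 2 :=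
  spectra_card_general p p' hp hp'
end

section
/- Let (p,p') be a pair of coprime positive integers with p ≥ 2, set a = p'/p, let 0 ≤ m, m' ≤ p−1, and suppose (r,s;θ) ∈ 𝒮^{(m)}_{p,p'} and (r',s';θ') ∈ 𝒮^{(m')}_{p,p'}. Then Σ_{(r'',s'';θ'')∈𝒮_{p,p'}} sin(πarr'') sin(πar'r'') e^{πia(r_m − r_{m'})(r''−2θ'')} = (p²/4) if (r,s,θ) = (r',s',θ'), and = 0 otherwise. -/
open Complex
open scoped Real

/-!
A triple (r, s, θ) ∈ 𝒮_{p,p'} is determined by the pair (r, X) with X = r − 2θ, and these pairs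
are exactly 1 ≤ r ≤ p − 1, 1 ≤ X ≤ p, r ≡ X (mod 2). Moreover r_m = X − 1, since
m ≡ (X − 1) p' ≡ (X − 1) ℓ (mod p). The sum is therefore a sum over such pairs of
sin(π a r r'') sin(π a r' r'') e^{π i a (X − X') X''}. Writing the parity condition as
(1 + (−1)^{r''+X''}) / 2 splits it into two products of a sine sum over r'' and a geometric sum
over X''; both are sums of 2p-th roots of unity over (half) a period, evaluated by orthogonality.
Coprimality of p and p' turns the resulting divisibility conditions into r = r' and X = X'.
-/

open Finset

section GeometricSums

variable {K : Type*} [Field K] {w : K} {n : ℕ}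

lemma sum_Icc_pow_eq_zero (hw : w ^ n = 1) (hw1 : w ≠ 1) : ∑ x ∈ Icc 1 n, w ^ x = 0 := by
  rw [← Ico_succ_right_eq_Icc, Order.succ_eq_add_one, geom_sum_Ico hw1 (by omega), pow_succ, hw]
  simp

lemma sum_Ioo_pow_add_inv_pow (hn : 0 < n) (hw : w ≠ 1) (hwn : w ^ n * w ^ n = 1) :
    ∑ x ∈ Ioo 0 n, (w ^ x + w⁻¹ ^ x) = -(1 + w ^ n) := by
  have hw0 : w ≠ 0 := by
    rintro rfl
    simp [zero_pow hn.ne'] at hwn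
  have hwi : w⁻¹ ≠ 1 := by simpa using hw
  have hIoo : Ioo 0 n = Ico 1 n := by ext; simp; omega
  rw [hIoo, sum_add_distrib, geom_sum_Ico hw hn, geom_sum_Ico hwi hn, inv_pow,
    inv_eq_of_mul_eq_one_right hwn]
  have h1 : w - 1 ≠ 0 := sub_ne_zero.2 hw
  have h2 : 1 - w ≠ 0 := sub_ne_zero.2 hw.symm
  rw [show w⁻¹ - 1 = (1 - w) / w by field_simp, pow_one, pow_one]
  field_simp
  ring

end GeometricSums

section TrigonometricSums

variable {n : ℕ}

lemma exp_pi_mul_I_div_pow (c : ℤ) (x : ℕ) :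
    cexp (π * I * c / n) ^ x = cexp (π * I * c * x / n) := by
  rw [← Complex.exp_nat_mul]; ring_nf

lemma exp_pi_mul_I_div_pow_self (hn : n ≠ 0) (c : ℤ) : cexp (π * I * c / n) ^ n = (-1) ^ c := by
  rw [exp_pi_mul_I_div_pow, mul_div_assoc, div_self (by exact_mod_cast hn), mul_one,
    ← Complex.exp_pi_mul_I, ← Complex.exp_int_mul]
  ring_nf

lemma exp_pi_mul_I_div_eq_one_iff (hn : n ≠ 0) (c : ℤ) :
    cexp (π * I * c / n) = 1 ↔ (2 * n : ℤ) ∣ c := by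
  rw [Complex.exp_eq_one_iff]
  constructor
  · rintro ⟨t, ht⟩
    have : (c : ℂ) = 2 * n * t := by
      field_simp at ht
      linear_combination ht
    exact ⟨t, by exact_mod_cast this⟩
  · rintro ⟨t, rfl⟩
    exact ⟨t, by field_simp; push_cast; ring⟩

lemma sum_Ioo_cos_pi_mul_div (hn : 0 < n) (c : ℤ) :
    ∑ x ∈ Ioo 0 n, Real.cos (π * c * x / n) =
      n * (if (2 * n : ℤ) ∣ c then 1 else 0) - (if 2 ∣ c then 1 else 0) := by
  set w := cexp (π * I * c / n)
  have hcos (x : ℕ) : (Real.cos (π * c * x / n) : ℂ) = (w ^ x + w⁻¹ ^ x) / 2 := by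
    rw [Complex.ofReal_cos, Complex.cos, inv_pow, exp_pi_mul_I_div_pow, ← Complex.exp_neg]
    push_cast
    ring_nf
  apply Complex.ofReal_injective
  rw [Complex.ofReal_sum, sum_congr rfl fun x _ => hcos x, ← sum_div]
  push_cast
  by_cases hc : (2 * n : ℤ) ∣ c
  · have hw : w = 1 := (exp_pi_mul_I_div_eq_one_iff hn.ne' c).2 hc
    have h2 : (2 : ℤ) ∣ c := (dvd_mul_right 2 _).trans hc
    simp only [hw, one_pow, inv_one, hc, h2, if_true, sum_const, Nat.card_Ioo, nsmul_eq_mul,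
      Nat.sub_zero]
    rw [Nat.cast_sub (by omega)]
    push_cast
    ring
  · have hw : w ≠ 1 := fun h => hc ((exp_pi_mul_I_div_eq_one_iff hn.ne' c).1 h)
    have hwn : w ^ n = (-1) ^ c := exp_pi_mul_I_div_pow_self hn.ne' c
    have hwn2 : w ^ n * w ^ n = 1 := by
      rw [hwn, ← zpow_add₀ (by norm_num), ← two_mul, zpow_mul]
      norm_num
    rw [sum_Ioo_pow_add_inv_pow hn hw hwn2, hwn, if_neg hc]
    rcases Int.even_or_odd c with he | ho
    · simp [he.neg_one_zpow, even_iff_two_dvd.1 he]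
    · simp [ho.neg_one_zpow, Int.not_even_iff_odd.2 ho, ← even_iff_two_dvd]

lemma sum_Ioo_sin_mul_sin (hn : 0 < n) (j k : ℤ) :
    ∑ x ∈ Ioo 0 n, Real.sin (π * j * x / n) * Real.sin (π * k * x / n) =
      n / 2 * ((if (2 * n : ℤ) ∣ j - k then 1 else 0) -
        (if (2 * n : ℤ) ∣ j + k then 1 else 0)) := by
  have hprod (x : ℕ) : Real.sin (π * j * x / n) * Real.sin (π * k * x / n) =
      (Real.cos (π * ↑(j - k) * x / n) - Real.cos (π * ↑(j + k) * x / n)) / 2 := by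
    have h := Real.two_mul_sin_mul_sin (π * j * x / n) (π * k * x / n)
    push_cast
    rw [show π * (j - k) * x / n = π * j * x / n - π * k * x / n by ring,
      show π * (j + k) * x / n = π * j * x / n + π * k * x / n by ring]
    linarith
  have hpar : (2 ∣ j - k) ↔ (2 ∣ j + k) := by omega
  rw [sum_congr rfl fun x _ => hprod x, ← sum_div, sum_sub_distrib,
    sum_Ioo_cos_pi_mul_div hn, sum_Ioo_cos_pi_mul_div hn]
  simp only [hpar]
  ring

lemma sum_Icc_exp_pi_mul_I_div (hn : 0 < n) {c : ℤ} (hc : 2 ∣ c) :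
    ∑ x ∈ Icc 1 n, cexp (π * I * c * x / n) = if (2 * n : ℤ) ∣ c then (n : ℂ) else 0 := by
  simp_rw [← exp_pi_mul_I_div_pow]
  split_ifs with h
  · simp [(exp_pi_mul_I_div_eq_one_iff hn.ne' c).2 h]
  · refine sum_Icc_pow_eq_zero ?_ fun h1 => h ((exp_pi_mul_I_div_eq_one_iff hn.ne' c).1 h1)
    rw [exp_pi_mul_I_div_pow_self hn.ne', (even_iff_two_dvd.2 hc).neg_one_zpow]

/-- When `c` is odd the exponential sum is not a full period, but then `j ± k` is odd too and the
sine sum vanishes. -/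
lemma sum_sin_mul_sin_mul_sum_exp (hn : 0 < n) {j k c : ℤ} (hpar : 2 ∣ j + k - c) :
    ((∑ x ∈ Ioo 0 n, Real.sin (π * j * x / n) * Real.sin (π * k * x / n) : ℝ) : ℂ) *
        ∑ y ∈ Icc 1 n, cexp (π * I * c * y / n) =
      n ^ 2 / 2 * (((if (2 * n : ℤ) ∣ j - k then 1 else 0) -
        (if (2 * n : ℤ) ∣ j + k then 1 else 0)) * (if (2 * n : ℤ) ∣ c then 1 else 0)) := by
  rw [sum_Ioo_sin_mul_sin hn]
  by_cases hc : 2 ∣ c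
  · rw [sum_Icc_exp_pi_mul_I_div hn hc]
    split_ifs <;> push_cast <;> ring
  · have hodd (d : ℤ) (hd : 2 ∣ d - c) : ¬ (2 * n : ℤ) ∣ d := fun h =>
      hc (by have := (dvd_mul_right 2 (n : ℤ)).trans h; omega)
    simp [hodd (j - k) (by omega), hodd (j + k) hpar]

end TrigonometricSums

lemma two_mul_sum_filter_even_add {R : Type*} [CommRing R] (s t : Finset ℕ) (u v : ℕ → R) :
    2 * ∑ z ∈ (s ×ˢ t).filter (fun z => Even (z.1 + z.2)), u z.1 * v z.2 =
      (∑ a ∈ s, u a) * ∑ b ∈ t, v b + (∑ a ∈ s, (-1) ^ a * u a) * ∑ b ∈ t, (-1) ^ b * v b := by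
  rw [sum_filter, mul_sum, sum_mul_sum, sum_mul_sum, ← sum_add_distrib, sum_product]
  refine sum_congr rfl fun a _ => ?_
  rw [← sum_add_distrib]
  refine sum_congr rfl fun b _ => ?_
  have hsign : (-1 : R) ^ a * u a * ((-1) ^ b * v b) = (-1) ^ (a + b) * (u a * v b) := by
    rw [pow_add]; ring
  rw [hsign]
  rcases Nat.even_or_odd (a + b) with h | h
  · rw [if_pos h, h.neg_one_pow]; ring
  · rw [if_neg (Nat.not_even_iff_odd.2 h), h.neg_one_pow]; ring

def spectraPairs (n : ℕ) : Finset (ℕ × ℕ) :=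
  (Ioo 0 n ×ˢ Icc 1 n).filter fun z => Even (z.1 + z.2)

lemma two_mul_sum_spectraPairs {n : ℕ} (hn : 0 < n) {j k c : ℤ} (hpar : 2 ∣ j + k - c) :
    2 * ∑ z ∈ spectraPairs n, (Real.sin (π * j * z.1 / n) : ℂ) * Real.sin (π * k * z.1 / n) *
          cexp (π * I * c * z.2 / n) =
      n ^ 2 / 2 * (((if (2 * n : ℤ) ∣ j - k then 1 else 0) -
          (if (2 * n : ℤ) ∣ j + k then 1 else 0)) * (if (2 * n : ℤ) ∣ c then 1 else 0)) +
        n ^ 2 / 2 * (((if (2 * n : ℤ) ∣ j + n - k then 1 else 0) -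
          (if (2 * n : ℤ) ∣ j + n + k then 1 else 0)) * (if (2 * n : ℤ) ∣ c + n then 1 else 0)) := by
  have hnC : (n : ℂ) ≠ 0 := by exact_mod_cast hn.ne'
  have hsin (x : ℕ) : (-1) ^ x * ((Real.sin (π * j * x / n) : ℂ) * Real.sin (π * k * x / n)) =
      ((Real.sin (π * ↑(j + n) * x / n) * Real.sin (π * k * x / n) : ℝ) : ℂ) := by
    rw [show π * ↑(j + n) * x / n = π * j * x / n + x * π by push_cast; field_simp,
      Real.sin_add_nat_mul_pi]
    push_cast; ring
  have hexp (y : ℕ) : (-1) ^ y * cexp (π * I * c * y / n) = cexp (π * I * ↑(c + n) * y / n) := by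
    rw [← Complex.exp_pi_mul_I, ← Complex.exp_nat_mul, ← Complex.exp_add]
    congr 1
    push_cast
    field_simp
    ring
  have hcast : ∑ x ∈ Ioo 0 n, (Real.sin (π * j * x / n) : ℂ) * Real.sin (π * k * x / n) =
      ((∑ x ∈ Ioo 0 n, Real.sin (π * j * x / n) * Real.sin (π * k * x / n) : ℝ) : ℂ) := by
    push_cast; rfl
  refine (two_mul_sum_filter_even_add _ _
    (fun x => (Real.sin (π * j * x / n) : ℂ) * Real.sin (π * k * x / n))
    (fun y => cexp (π * I * c * y / n))).trans ?_
  rw [sum_congr rfl fun x _ => hsin x, sum_congr rfl fun y _ => hexp y, ← Complex.ofReal_sum,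
    hcast, sum_sin_mul_sin_mul_sum_exp hn hpar, sum_sin_mul_sin_mul_sum_exp hn (by omega)]

lemma mem_spectraSet_iff {p p' : ℤ} (hp : 0 < p) (hp' : 0 < p') (r s θ : ℤ) :
    (r, s, θ) ∈ SpectraSet p p' ↔ 1 ≤ r ∧ r ≤ p - 1 ∧ 1 ≤ r - 2 * θ ∧ r - 2 * θ ≤ p ∧
      s = (r - 2 * θ - 1) * p' / p := by
  simp only [SpectraSet, Set.mem_ofPred_eq]
  set X := r - 2 * θ
  constructor
  · rintro ⟨hr1, hr2, hs1, hs2, m, hm1, hm2, heq⟩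
    have hX : (X - 1) * p' = m + p * s :=
      mul_left_cancel₀ two_ne_zero (by linear_combination -heq)
    refine ⟨hr1, hr2, by nlinarith, by nlinarith, ?_⟩
    rw [hX, Int.add_mul_ediv_left _ _ hp.ne', Int.ediv_eq_zero_of_lt hm1 (by omega), zero_add]
  · rintro ⟨hr1, hr2, hX1, hX2, hs⟩
    have hdiv := Int.emod_add_mul_ediv ((X - 1) * p') p
    rw [← hs] at hdiv
    have hm1 := Int.emod_nonneg ((X - 1) * p') hp.ne'
    have hm2 := Int.emod_lt_of_pos ((X - 1) * p') hp
    refine ⟨hr1, hr2, ?_, ?_, _, hm1, by omega, by linear_combination 2 * hdiv⟩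
    · rw [hs]; exact Int.ediv_nonneg (by nlinarith) hp.le
    · have := Int.ediv_lt_of_lt_mul hp (show (X - 1) * p' < p' * p by nlinarith)
      omega

lemma spectraSet_eq_iff {p p' r s θ r' s' θ' : ℤ} (hp : 0 < p) (hp' : 0 < p')
    (hx : (r, s, θ) ∈ SpectraSet p p') (hy : (r', s', θ') ∈ SpectraSet p p') :
    (r, s, θ) = (r', s', θ') ↔ r = r' ∧ r - 2 * θ = r' - 2 * θ' := by
  have hs := ((mem_spectraSet_iff hp hp' r s θ).1 hx).2.2.2.2
  have hs' := ((mem_spectraSet_iff hp hp' r' s' θ').1 hy).2.2.2.2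
  simp only [Prod.mk.injEq]
  constructor
  · rintro ⟨rfl, -, rfl⟩
    exact ⟨rfl, rfl⟩
  · rintro ⟨rfl, h⟩
    obtain rfl : θ = θ' := by omega
    exact ⟨rfl, hs.trans hs'.symm, rfl⟩

lemma tsum_spectraSet {α : Type*} [AddCommMonoid α] [TopologicalSpace α] {n : ℕ} {p' : ℤ}
    (hn : 0 < n) (hp' : 0 < p') (F : ℤ → ℤ → α) :
    ∑' x : SpectraSet n p', F x.1.1 (x.1.1 - 2 * x.1.2.2) = ∑ z ∈ spectraPairs n, F z.1 z.2 := by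
  have hP (z : ℕ × ℕ) :
      z ∈ spectraPairs n ↔ 0 < z.1 ∧ z.1 < n ∧ 1 ≤ z.2 ∧ z.2 ≤ n ∧ (z.1 + z.2) % 2 = 0 := by
    simp [spectraPairs, Nat.even_iff, and_assoc]
  let g : ℕ × ℕ → ℤ × ℤ × ℤ := fun z => (z.1, (z.2 - 1) * p' / n, (z.1 - z.2) / 2)
  have hgX {z : ℕ × ℕ} (hz : z ∈ spectraPairs n) : (g z).1 - 2 * (g z).2.2 = z.2 := by
    rw [hP] at hz; simp only [g]; omega
  have hS : SpectraSet n p' = g '' spectraPairs n := by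
    ext ⟨r, s, θ⟩
    rw [mem_spectraSet_iff (by exact_mod_cast hn) hp']
    constructor
    · rintro ⟨h1, h2, h3, h4, h5⟩
      refine ⟨(r.toNat, (r - 2 * θ).toNat), (hP _).2 ⟨by omega, by omega, by omega,
        by omega, by omega⟩, ?_⟩
      simp only [g, Prod.ext_iff]
      refine ⟨by omega, ?_, by omega⟩
      rw [h5, Int.toNat_of_nonneg (by omega)]
    · rintro ⟨z, hz, hgz⟩
      have hzX : r - 2 * θ = z.2 := by simpa [hgz] using hgX hz
      simp only [g, Prod.mk.injEq] at hgz
      obtain ⟨rfl, rfl, -⟩ := hgz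
      rw [Finset.mem_coe, hP] at hz
      refine ⟨by omega, by omega, by omega, by omega, ?_⟩
      rw [hzX]
  have hinj : Set.InjOn g (spectraPairs n) := by
    intro z hz z' hz' h
    have h1 : (z.1 : ℤ) = z'.1 := congrArg Prod.fst h
    have h2 := hgX hz
    rw [h, hgX hz'] at h2
    exact Prod.ext (by omega) (by omega)
  rw [hS]
  refine (tsum_image (fun x : ℤ × ℤ × ℤ => F x.1 (x.1 - 2 * x.2.2)) hinj).trans ?_
  rw [Finset.tsum_subtype' _ (fun z => F (g z).1 ((g z).1 - 2 * (g z).2.2))]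
  exact sum_congr rfl fun z hz => by rw [hgX hz]

lemma eq_zero_of_dvd_mul_of_abs_lt {n c d : ℤ} (hco : IsCoprime n c) (hd : n ∣ c * d)
    (h : |d| < n) : d = 0 :=
  Int.eq_zero_of_abs_lt_dvd (hco.dvd_of_dvd_mul_left hd) h

lemma residue_index_eq {n p' k ℓ m s X rm sm : ℤ} (hco : IsCoprime n p') (hkl : p' = k * n + ℓ)
    (hm : 2 * m + 2 * p' - n = 2 * X * p' - (2 * s + 1) * n)
    (hrm : 0 ≤ rm ∧ rm ≤ n - 1 ∧ m = ℓ * rm - n * sm) (hX : 1 ≤ X ∧ X ≤ n) : rm = X - 1 := by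
  have hcl : IsCoprime n ℓ := by
    rwa [hkl, add_comm, mul_comm, IsCoprime.add_mul_left_right_iff] at hco
  have hm' : m = (X - 1) * p' - n * s := mul_left_cancel₀ two_ne_zero (by linear_combination hm)
  have := eq_zero_of_dvd_mul_of_abs_lt hcl (d := rm - (X - 1))
    ⟨sm + (X - 1) * k - s, by linear_combination hm' - hrm.2.2 + (X - 1) * hkl⟩
    (abs_lt.2 ⟨by omega, by omega⟩)
  omega

lemma not_two_mul_dvd_mul_add_self {n p' Δ : ℤ} (hco : IsCoprime n p') (hn : 0 < n)
    (hΔ : |Δ| < n) : ¬ 2 * n ∣ p' * Δ + n := by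
  intro h
  have hΔ0 : Δ = 0 := eq_zero_of_dvd_mul_of_abs_lt hco
    ((dvd_add_left (dvd_refl n)).1 ((Dvd.intro_left 2 rfl).trans h)) hΔ
  rw [hΔ0, mul_zero, zero_add] at h
  have := Int.le_of_dvd hn h
  omega

lemma not_two_mul_dvd_mul_add {n p' r r' : ℤ} (hco : IsCoprime n p') (hr : 1 ≤ r ∧ r ≤ n - 1)
    (hr' : 1 ≤ r' ∧ r' ≤ n - 1) (hpar : 2 ∣ r - r') : ¬ 2 * n ∣ p' * r + p' * r' := by
  rintro ⟨t, ht⟩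
  have hsum : r + r' - n = 0 := eq_zero_of_dvd_mul_of_abs_lt hco
    ⟨2 * t - p', by linear_combination ht⟩ (abs_lt.2 ⟨by omega, by omega⟩)
  have hp'2 : p' = 2 * t := mul_left_cancel₀ (show n ≠ 0 by omega)
    (by linear_combination ht - p' * hsum)
  have := Int.isUnit_iff.1 (hco.isUnit_of_dvd' (show (2 : ℤ) ∣ n by omega) ⟨t, hp'2⟩)
  omega

lemma ite_dvd_orthogonality {n p' r r' Δ : ℤ} (hco : IsCoprime n p')
    (hr : 1 ≤ r ∧ r ≤ n - 1) (hr' : 1 ≤ r' ∧ r' ≤ n - 1) (hΔ : |Δ| < n)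
    (hpar : 2 ∣ r - r' - Δ) :
    (((if 2 * n ∣ p' * r - p' * r' then 1 else 0) -
        (if 2 * n ∣ p' * r + p' * r' then 1 else 0)) *
      (if 2 * n ∣ p' * Δ then 1 else 0) : ℂ) = if r = r' ∧ Δ = 0 then 1 else 0 := by
  have hdvd {d : ℤ} (hd : |d| < n) (h : 2 * n ∣ p' * d) : d = 0 :=
    eq_zero_of_dvd_mul_of_abs_lt hco ((Dvd.intro_left 2 rfl).trans h) hd
  by_cases hΔ0 : Δ = 0
  · subst hΔ0
    have hdiff : 2 * n ∣ p' * r - p' * r' ↔ r = r' := by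
      refine ⟨fun h => ?_, fun h => by simp [h]⟩
      have := hdvd (d := r - r') (abs_lt.2 ⟨by omega, by omega⟩) (by rwa [mul_sub])
      omega
    simp [not_two_mul_dvd_mul_add hco hr hr' (by omega), hdiff]
  · have : ¬ 2 * n ∣ p' * Δ := fun h => hΔ0 (hdvd hΔ h)
    simp [this, hΔ0]

theorem spectra_sum_orthogonality_general (p p' k ℓ : ℤ) (hp : 2 ≤ p) (hp' : 1 ≤ p')
    (hco : IsCoprime p p')
    (hkl : p' = k * p + ℓ)
    (m m' : ℤ)
    (rm sm : ℤ) (hrm : 0 ≤ rm ∧ rm ≤ p - 1 ∧ 0 ≤ sm ∧ sm ≤ ℓ - 1 ∧ m = ℓ * rm - p * sm)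
    (rm' sm' : ℤ)
    (hrm' : 0 ≤ rm' ∧ rm' ≤ p - 1 ∧ 0 ≤ sm' ∧ sm' ≤ ℓ - 1 ∧ m' = ℓ * rm' - p * sm')
    (r s θ : ℤ) (hx : (r, s, θ) ∈ SpectraSet p p')
    (hxm : 2 * m + 2 * p' - p = 2 * (r - 2 * θ) * p' - (2 * s + 1) * p)
    (r' s' θ' : ℤ) (hy : (r', s', θ') ∈ SpectraSet p p')
    (hym : 2 * m' + 2 * p' - p = 2 * (r' - 2 * θ') * p' - (2 * s' + 1) * p) :
    ∑' x : SpectraSet p p',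
        (Real.sin (π * ((p' : ℝ) / p) * r * x.1.1) : ℂ) *
          (Real.sin (π * ((p' : ℝ) / p) * r' * x.1.1) : ℂ) *
          Complex.exp ((π : ℂ) * Complex.I * ((p' : ℂ) / p) * ((rm : ℂ) - rm') *
            ((x.1.1 : ℂ) - 2 * x.1.2.2)) =
      if (r, s, θ) = (r', s', θ') then (p : ℂ) ^ 2 / 4 else 0 := by
  obtain ⟨n, rfl⟩ : ∃ n : ℕ, p = n := ⟨p.toNat, by omega⟩
  have hn : 0 < n := by omega
  obtain ⟨hr, hr₂, hX, hX₂, -⟩ := (mem_spectraSet_iff (by omega) (by omega) r s θ).1 hx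
  obtain ⟨hr', hr'₂, hX', hX'₂, -⟩ := (mem_spectraSet_iff (by omega) (by omega) r' s' θ').1 hy
  have hrmX := residue_index_eq hco hkl hxm ⟨hrm.1, hrm.2.1, hrm.2.2.2.2⟩ ⟨hX, hX₂⟩
  have hrmX' := residue_index_eq hco hkl hym ⟨hrm'.1, hrm'.2.1, hrm'.2.2.2.2⟩ ⟨hX', hX'₂⟩
  have hsum := two_mul_sum_spectraPairs hn (j := p' * r) (k := p' * r') (c := p' * (rm - rm'))
    ⟨p' * (r' + θ - θ'), by rw [hrmX, hrmX']; ring⟩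
  rw [if_neg (not_two_mul_dvd_mul_add_self hco (by omega) (abs_lt.2 ⟨by omega, by omega⟩)),
    ite_dvd_orthogonality hco ⟨hr, hr₂⟩ ⟨hr', hr'₂⟩ (abs_lt.2 ⟨by omega, by omega⟩)
      ⟨θ - θ', by omega⟩] at hsum
  have hiff : (r, s, θ) = (r', s', θ') ↔ r = r' ∧ rm - rm' = 0 := by
    rw [spectraSet_eq_iff (by omega) (by omega) hx hy]
    omega
  set F : ℤ → ℤ → ℂ := fun a b => (Real.sin (π * ↑(p' * r) * a / n) : ℂ) *
    Real.sin (π * ↑(p' * r') * a / n) * cexp (π * I * ↑(p' * (rm - rm')) * b / n) with hF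
  calc _ = ∑' x : SpectraSet n p', F x.1.1 (x.1.1 - 2 * x.1.2.2) :=
        tsum_congr fun x => by simp only [hF]; push_cast; ring_nf
    _ = ∑ z ∈ spectraPairs n, F z.1 z.2 := tsum_spectraSet hn (by omega) F
    _ = _ := by
      simp only [hF, Int.cast_natCast]
      rw [if_congr hiff rfl rfl]
      split_ifs at hsum ⊢ <;> linear_combination hsum / 2

/-- Unitarity lemma for the discrete spectra. -/
theorem spectra_sum_orthogonality (p p' k ℓ : ℤ) (hp : 2 ≤ p) (hp' : 1 ≤ p')
    (hco : IsCoprime p p') (hk : 0 ≤ k) (hℓ1 : 1 ≤ ℓ) (hℓ2 : ℓ ≤ p - 1)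
    (hkl : p' = k * p + ℓ)
    (m m' : ℤ) (hm : 0 ≤ m ∧ m ≤ p - 1) (hm' : 0 ≤ m' ∧ m' ≤ p - 1)
    (rm sm : ℤ) (hrm : 0 ≤ rm ∧ rm ≤ p - 1 ∧ 0 ≤ sm ∧ sm ≤ ℓ - 1 ∧ m = ℓ * rm - p * sm)
    (rm' sm' : ℤ)
    (hrm' : 0 ≤ rm' ∧ rm' ≤ p - 1 ∧ 0 ≤ sm' ∧ sm' ≤ ℓ - 1 ∧ m' = ℓ * rm' - p * sm')
    (r s θ : ℤ) (hx : (r, s, θ) ∈ SpectraSet p p')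
    (hxm : 2 * m + 2 * p' - p = 2 * (r - 2 * θ) * p' - (2 * s + 1) * p)
    (r' s' θ' : ℤ) (hy : (r', s', θ') ∈ SpectraSet p p')
    (hym : 2 * m' + 2 * p' - p = 2 * (r' - 2 * θ') * p' - (2 * s' + 1) * p) :
    ∑' x : SpectraSet p p',
        (Real.sin (π * ((p' : ℝ) / p) * r * x.1.1) : ℂ) *
          (Real.sin (π * ((p' : ℝ) / p) * r' * x.1.1) : ℂ) *
          Complex.exp ((π : ℂ) * Complex.I * ((p' : ℂ) / p) * ((rm : ℂ) - rm') *
            ((x.1.1 : ℂ) - 2 * x.1.2.2)) =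
      if (r, s, θ) = (r', s', θ') then (p : ℂ) ^ 2 / 4 else 0 :=
  spectra_sum_orthogonality_general p p' k ℓ hp hp' hco hkl m m' rm sm hrm rm' sm' hrm' r s θ hx hxm
    r' s' θ' hy hym
end
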